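/- arXiv:1212.1548 — 2 statements merged into one kernel-verified Lean document; each statement's English description precedes it below -/
import Mathlib

section
/- On a finite LTS, the fixed point of the partition refinement function F, started from the total relation, equals (strong) bisimilarity. -/
/-! Relations `S → S → Prop` are ordered pointwise by implication, and `prF Tr` is monotone, so
`prIter Tr` is a decreasing chain; on a finite state space it becomes constant after finitely many
steps. A symmetric relation `R` is a bisimulation exactly when `R ≤ prF Tr R`: every bisimulation
therefore lies below every iterate, and the stable iterate, being symmetric and a fixed point, is a
bisimulation itself. -/

/-- One refinement step of the standard partition refinement algorithm. -/
def prF {S A : Type*} (Tr : S → A → S → Prop) (P : S → S → Prop) :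
    S → S → Prop := fun s t =>
  (∀ a s', Tr s a s' → ∃ t', Tr t a t' ∧ P s' t') ∧
  (∀ a t', Tr t a t' → ∃ s', Tr s a s' ∧ P s' t')

/-- Iteration of `F` starting from the total relation. -/
def prIter {S A : Type*} (Tr : S → A → S → Prop) : ℕ → (S → S → Prop)
  | 0 => fun _ _ => True
  | n + 1 => prF Tr (prIter Tr n)

/-- Strong bisimilarity: the union of all (symmetric) bisimulations. -/
def Bisimilar {S A : Type*} (Tr : S → A → S → Prop) (s t : S) : Prop :=
  ∃ R : S → S → Prop, Symmetric R ∧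
    (∀ s t, R s t → ∀ a s', Tr s a s' → ∃ t', Tr t a t' ∧ R s' t') ∧
    R s t

section PartitionRefinement

variable {S A : Type*} (Tr : S → A → S → Prop)

theorem prF_monotone : Monotone (prF Tr) := fun _ _ hPQ _ _ ⟨hfwd, hbwd⟩ =>
  ⟨fun a s' hs' => (hfwd a s' hs').imp fun _ ⟨ht, hP⟩ => ⟨ht, hPQ _ _ hP⟩,
    fun a t' ht' => (hbwd a t' ht').imp fun _ ⟨hs, hP⟩ => ⟨hs, hPQ _ _ hP⟩⟩

theorem prIter_antitone : Antitone (prIter Tr) := by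
  refine antitone_nat_of_succ_le fun n => ?_
  induction n with
  | zero => exact fun _ _ _ => trivial
  | succ n ih => exact prF_monotone Tr ih

theorem prIter_symmetric (n : ℕ) : Symmetric (prIter Tr n) := by
  induction n with
  | zero => exact fun _ _ _ => trivial
  | succ n ih =>
    exact fun _ _ ⟨hfwd, hbwd⟩ =>
      ⟨fun a t' ht' => (hbwd a t' ht').imp fun _ ⟨hs, hP⟩ => ⟨hs, ih hP⟩,
        fun a s' hs' => (hfwd a s' hs').imp fun _ ⟨ht, hP⟩ => ⟨ht, ih hP⟩⟩

theorem exists_prIter_succ_eq [Finite S] : ∃ n, prIter Tr (n + 1) = prIter Tr n := by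
  obtain ⟨n, hn⟩ := WellFoundedLT.antitone_chain_condition (prIter_antitone Tr)
  exact ⟨n, (hn (n + 1) n.le_succ).symm⟩

theorem le_prF_of_bisimulation {R : S → S → Prop} (hsymm : Symmetric R)
    (hR : ∀ s t, R s t → ∀ a s', Tr s a s' → ∃ t', Tr t a t' ∧ R s' t') :
    R ≤ prF Tr R := fun s t hst =>
  ⟨hR s t hst, fun a t' ht' => (hR t s (hsymm hst) a t' ht').imp fun _ ⟨hs, hR'⟩ =>
    ⟨hs, hsymm hR'⟩⟩

theorem le_prIter_of_le_prF {R : S → S → Prop} (hR : R ≤ prF Tr R) (n : ℕ) :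
    R ≤ prIter Tr n := by
  induction n with
  | zero => exact fun _ _ _ => trivial
  | succ n ih => exact hR.trans (prF_monotone Tr ih)

theorem bisimilar_of_le_prF {R : S → S → Prop} (hsymm : Symmetric R) (hR : R ≤ prF Tr R)
    {s t : S} (hst : R s t) : Bisimilar Tr s t :=
  ⟨R, hsymm, fun s t hst a s' hs' => (hR s t hst).1 a s' hs', hst⟩

end PartitionRefinement

/-- On a finite LTS, the iteration of the partition refinement function `F`,
started from the total relation, terminates, and its fixed point equals
(strong) bisimilarity. -/
theorem partition_refinement_computes_bisimilarity {S A : Type*} [Fintype S]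
    (Tr : S → A → S → Prop) :
    ∃ n, prIter Tr (n + 1) = prIter Tr n ∧
      ∀ s t, prIter Tr n s t ↔ Bisimilar Tr s t := by
  obtain ⟨n, hfix⟩ := exists_prIter_succ_eq Tr
  refine ⟨n, hfix, fun s t => ⟨?_, ?_⟩⟩
  · exact bisimilar_of_le_prF Tr (prIter_symmetric Tr n) hfix.ge
  · rintro ⟨R, hsymm, hR, hst⟩
    exact le_prIter_of_le_prF Tr (le_prF_of_bisimulation Tr hsymm hR) n s t hst
end

section
/- If the equivalence relation R refines the initial partition (configurations equated only if same barbs) and R is a fixed point of the irredundant refinement function IR, then R is an irredundant bisimulation. -/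
/- A ccp configuration is a pair `⟨P, d⟩` of a process and a store.  The
constraint system is a semilattice `(Con, ≤, ⊔)`. -/

variable {Proc Con : Type*}

section CCP
variable [SemilatticeSup Con]

/-- A configuration `⟨P,d⟩` satisfies the barb `c` iff `c ⊑ d`. -/
def Barb (γ : Proc × Con) (c : Con) : Prop := c ≤ γ.2

/-- Add a constraint to the store of a configuration: `⟨P, d ⊔ a⟩`. -/
def addc (γ : Proc × Con) (a : Con) : Proc × Con := (γ.1, γ.2 ⊔ a)

/-- Saturated barbed bisimulation w.r.t. the reduction relation `Red`:
a symmetric relation matching barbs, reductions, and closed under adding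
arbitrary constraints to the stores. -/
def SBBisim (Red : Proc × Con → Proc × Con → Prop)
    (R : Proc × Con → Proc × Con → Prop) : Prop :=
  Symmetric R ∧ ∀ γ₁ γ₂, R γ₁ γ₂ →
    (∀ c, Barb γ₁ c → Barb γ₂ c) ∧
    (∀ γ₁', Red γ₁ γ₁' → ∃ γ₂', Red γ₂ γ₂' ∧ R γ₁' γ₂') ∧
    (∀ a : Con, R (addc γ₁ a) (addc γ₂ a))

/-- Saturated barbed bisimilarity `∼̇_sb`. -/
def sbBisimilar (Red : Proc × Con → Proc × Con → Prop)
    (γ₁ γ₂ : Proc × Con) : Prop :=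
  ∃ R, SBBisim Red R ∧ R γ₁ γ₂

/-- The transition `γ →β γ₂` is redundant w.r.t. `R`: it is dominated in `R`
by some transition `γ →α γ₁`, i.e. `γ →α γ₁ ⊢_D γ →β ⟨γ₁.1, γ₁.2 ⊔ e⟩`
(with `β = α ⊔ e`, `α ≠ β`) and the derived target is `R`-related to `γ₂`. -/
def Redundant (T : Proc × Con → Con → Proc × Con → Prop)
    (R : Proc × Con → Proc × Con → Prop)
    (γ : Proc × Con) (β : Con) (γ₂ : Proc × Con) : Prop :=
  ∃ α γ₁ e, T γ α γ₁ ∧ β = α ⊔ e ∧ α ≠ β ∧ R (γ₁.1, γ₁.2 ⊔ e) γ₂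

/-- Irredundant bisimulation w.r.t. the labeled transition relation `T`:
barbs are matched, and every transition irredundant in `R` is matched with
equal label into `R`. -/
def IrredBisim (T : Proc × Con → Con → Proc × Con → Prop)
    (R : Proc × Con → Proc × Con → Prop) : Prop :=
  Symmetric R ∧ ∀ γ₁ γ₂, R γ₁ γ₂ →
    (∀ c, Barb γ₁ c → Barb γ₂ c) ∧
    (∀ α γ₁', T γ₁ α γ₁' → ¬ Redundant T R γ₁ α γ₁' →
      ∃ γ₂', T γ₂ α γ₂' ∧ R γ₁' γ₂')

/-- Irredundant bisimilarity `∼_I`. -/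
def irredBisimilar (T : Proc × Con → Con → Proc × Con → Prop)
    (γ₁ γ₂ : Proc × Con) : Prop :=
  ∃ R, IrredBisim T R ∧ R γ₁ γ₂

/-- Syntactic bisimulation: barbs matched and all labeled transitions matched
with identical labels. -/
def SynBisim (T : Proc × Con → Con → Proc × Con → Prop)
    (R : Proc × Con → Proc × Con → Prop) : Prop :=
  Symmetric R ∧ ∀ γ₁ γ₂, R γ₁ γ₂ →
    (∀ c, Barb γ₁ c → Barb γ₂ c) ∧
    (∀ α γ₁', T γ₁ α γ₁' → ∃ γ₂', T γ₂ α γ₂' ∧ R γ₁' γ₂')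

/-- Syntactic bisimilarity `∼_S`. -/
def synBisimilar (T : Proc × Con → Con → Proc × Con → Prop)
    (γ₁ γ₂ : Proc × Con) : Prop :=
  ∃ R, SynBisim T R ∧ R γ₁ γ₂

/-- Soundness of labels: `γ →α γ'` implies the reduction `⟨P, d ⊔ α⟩ ⟶ γ'`. -/
def SoundLTS (T : Proc × Con → Con → Proc × Con → Prop)
    (Red : Proc × Con → Proc × Con → Prop) : Prop :=
  ∀ γ α γ', T γ α γ' → Red (addc γ α) γ'

/-- Completeness of labels: `⟨P, d ⊔ a⟩ ⟶ γ''` implies there is a labeled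
transition `γ →α γ'` with `α ⊑ a` whose target extended by `a` equals `γ''`. -/
def CompleteLTS (T : Proc × Con → Con → Proc × Con → Prop)
    (Red : Proc × Con → Proc × Con → Prop) : Prop :=
  ∀ γ a γ'', Red (addc γ a) γ'' → ∃ α γ', T γ α γ' ∧ α ≤ a ∧ addc γ' a = γ''

end CCP

/-- The refinement function IR of the ccp partition refinement algorithm:
transitions irredundant in P must be matched into P, symmetrized. -/
def IRfun [SemilatticeSup Con] (T : Proc × Con → Con → Proc × Con → Prop)
    (P : Proc × Con → Proc × Con → Prop) :
    Proc × Con → Proc × Con → Prop := fun γ₁ γ₂ =>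
  (∀ α γ₁', T γ₁ α γ₁' → ¬ Redundant T P γ₁ α γ₁' →
    ∃ γ₂', T γ₂ α γ₂' ∧ P γ₁' γ₂') ∧
  (∀ α γ₂', T γ₂ α γ₂' → ¬ Redundant T P γ₂ α γ₂' →
    ∃ γ₁', T γ₁ α γ₁' ∧ P γ₂' γ₁')

theorem barb_of_store_eq [SemilatticeSup Con] {γ₁ γ₂ : Proc × Con} (h : γ₁.2 = γ₂.2)
    {c : Con} (hc : Barb γ₁ c) : Barb γ₂ c :=
  (h ▸ hc : c ≤ γ₂.2)

theorem irredBisim_of_le_IRfun [SemilatticeSup Con]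
    (T : Proc × Con → Con → Proc × Con → Prop) (R : Proc × Con → Proc × Con → Prop)
    (hsymm : ∀ γ₁ γ₂, R γ₁ γ₂ → R γ₂ γ₁) (hstore : ∀ γ₁ γ₂, R γ₁ γ₂ → γ₁.2 = γ₂.2)
    (hpost : ∀ γ₁ γ₂, R γ₁ γ₂ → IRfun T R γ₁ γ₂) :
    IrredBisim T R :=
  ⟨fun _ _ => hsymm _ _, fun γ₁ γ₂ h =>
    ⟨fun _ => barb_of_store_eq (hstore γ₁ γ₂ h), (hpost γ₁ γ₂ h).1⟩⟩

/-- If an equivalence relation R refines the initial partition (related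
configurations have the same store, hence the same barbs) and R is a fixed
point of the irredundant refinement function IR, then R is an irredundant
bisimulation. -/
theorem fixedPoint_IR_irredundant_bisim [SemilatticeSup Con]
    (T : Proc × Con → Con → Proc × Con → Prop)
    (R : Proc × Con → Proc × Con → Prop)
    (hequiv : Equivalence R)
    (hinit : ∀ γ₁ γ₂, R γ₁ γ₂ → γ₁.2 = γ₂.2)
    (hfix : ∀ γ₁ γ₂, R γ₁ γ₂ ↔ IRfun T R γ₁ γ₂) :
    IrredBisim T R :=
  irredBisim_of_le_IRfun T R (fun _ _ => hequiv.symm) hinit fun γ₁ γ₂ => (hfix γ₁ γ₂).mp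
end
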